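/- arXiv:2209.11740 — 2 statements merged into one kernel-verified Lean document; each statement's English description precedes it below -/
import Mathlib

section
/- Two successive subsampled convolutions compose into a single subsampled convolution: for any U, V ∈ l²(ℤ²) and s, t ∈ ℕ*, ((U ↓ s) ∗ V) ↓ t = (U ∗ (V ↑ s)) ↓ (s t), where (X ↓ s)[n] := X[s n] and (X ↑ s)[n] := X[n/s] if n/s ∈ ℤ², else 0. -/
open scoped Classical

noncomputable section

abbrev Zsq := Fin 2 → ℤ

/-- Discrete convolution on `l²(ℤ²)`. -/
def dconv (U V : Zsq → ℂ) (n : Zsq) : ℂ := ∑' k : Zsq, U k * V (n - k)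

/-- Subsampling `(X ↓ m)[n] := X[mn]`. -/
def dsample (m : ℕ) (X : Zsq → ℂ) (n : Zsq) : ℂ := X (m • n)

/-- Upsampling `(X ↑ m)[n] := X[n/m]` if `m ∣ n` componentwise, else `0`. -/
def usample (m : ℕ) (X : Zsq → ℂ) (n : Zsq) : ℂ :=
  if ∀ i, (m : ℤ) ∣ n i then X fun i => n i / (m : ℤ) else 0

/-! The support of `k ↦ (V ↑ s)[s p - k]` lies in `s ℤ²`, so reindexing the convolution sum
along the injection `m ↦ s m` turns `(U ∗ (V ↑ s))[s p]` into `((U ↓ s) ∗ V)[p]`. Applied at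
`p = t n` this is the theorem. -/

theorem usample_smul {s : ℕ} (hs : s ≠ 0) (X : Zsq → ℂ) (n : Zsq) :
    usample s X (s • n) = X n := by
  have hdvd : ∀ i, (s : ℤ) ∣ (s • n) i := fun i => ⟨n i, by simp⟩
  rw [usample, if_pos hdvd]
  congr 1
  funext i
  simp [Int.mul_ediv_cancel_left _ (Int.natCast_ne_zero.mpr hs)]

theorem usample_eq_zero_of_notMem_range {s : ℕ} (X : Zsq → ℂ) {n : Zsq}
    (hn : n ∉ Set.range (s • · : Zsq → Zsq)) : usample s X n = 0 := by
  refine if_neg fun hdvd => hn ⟨fun i => n i / s, funext fun i => ?_⟩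
  simpa using Int.mul_ediv_cancel' (hdvd i)

theorem dconv_usample_smul {s : ℕ} (hs : s ≠ 0) (U V : Zsq → ℂ) (p : Zsq) :
    dconv U (usample s V) (s • p) = dconv (dsample s U) V p := by
  have hsupp : Function.support (fun k => U k * usample s V (s • p - k)) ⊆
      Set.range (s • · : Zsq → Zsq) := by
    intro k hk
    by_contra hk_range
    refine hk (mul_eq_zero_of_right _ (usample_eq_zero_of_notMem_range V ?_))
    rintro ⟨q, hq⟩
    exact hk_range ⟨p - q, by simp only [smul_sub, hq, sub_sub_cancel]⟩
  rw [dconv, ← (smul_right_injective Zsq hs).tsum_eq hsupp]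
  simp only [dconv, dsample, ← smul_sub, usample_smul hs]

theorem stmt8_general (U V : Zsq → ℂ)
    (s t : ℕ) (hs : 0 < s) :
    dsample t (dconv (dsample s U) V) = dsample (s * t) (dconv U (usample s V)) := by
  funext n
  rw [dsample, dsample, mul_smul, dconv_usample_smul hs.ne']

/-- `((U ↓ s) ∗ V) ↓ t = (U ∗ (V ↑ s)) ↓ (st)`. -/
theorem stmt8 (U V : Zsq → ℂ) (hV : (Function.support V).Finite)
    (s t : ℕ) (hs : 0 < s) (ht : 0 < t) :
    dsample t (dconv (dsample s U) V) = dsample (s * t) (dconv U (usample s V)) :=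
  stmt8_general U V s t hs
end
end

section
/- Let z₀, …, z_{N−1} be points on the unit circle S¹ ordered by increasing argument θ₀ ≤ … ≤ θ_{N−1} in [0, 2π), with θ_N := θ₀ + 2π, and let Δ_i := θ_{i+1} − θ_i. Let Z be a uniformly distributed random variable on S¹ and define G_max := max_{0 ≤ k < N} Re(Z* z_k). Then E[G_max] = (1/π) Σ_{i=0}^{N−1} sin(Δ_i/2) and E[G_max²] = 1/2 + (1/(4π)) Σ_{i=0}^{N−1} sin(Δ_i). -/
open MeasureTheory Real

noncomputable section

/-- `G_max(θ) := max_k Re( conj(e^{iθ}) z_k )` where `z_k = e^{i t_k}`. -/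
def gmax (N : ℕ) (t : Fin N → ℝ) (θ : ℝ) : ℝ :=
  ⨆ k : Fin N,
    ((starRingEnd ℂ) (Complex.exp (θ * Complex.I)) * Complex.exp ((t k : ℂ) * Complex.I)).re

/-- Angular gaps `Δ_i := θ_{i+1} − θ_i`, with `θ_N := θ₀ + 2π`. -/
def gap (N : ℕ) (t : Fin N → ℝ) (i : Fin N) : ℝ :=
  (if h : (i : ℕ) + 1 < N then t ⟨(i : ℕ) + 1, h⟩ else t ⟨0, Nat.pos_of_ne_zero (by omega)⟩ + 2 * π) - t i

/-
With `Z = e^{iθ}` we have `Re (Z* z_k) = cos (θ - θ_k)`. On the arc `θ_i ≤ θ ≤ θ_{i+1}` the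
maximum of these cosines is attained at an endpoint of the arc, because modulo `2π` every other
point lies beyond one of the endpoints. The maximum is `cos (θ - θ_i)` up to the midpoint and
`cos (θ_{i+1} - θ)` after it, so by symmetry `∫ φ (G_max)` over the arc is
`2 ∫_0^{Δ_i/2} φ (cos x) dx` for any continuous `φ`. Summing over the arcs, which tile a period of
`G_max`, and taking `φ = id` and `φ = (·)^2` gives the two formulas, using `∑ Δ_i = 2π` for the
second.
-/

lemma Real.cos_le_cos_of_nonneg_of_add_le_two_pi {u v : ℝ} (hu : 0 ≤ u) (huv : u ≤ v)
    (h2π : u + v ≤ 2 * π) : cos v ≤ cos u := by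
  rcases le_or_gt v π with hv | hv
  · exact cos_le_cos_of_nonneg_of_le_pi hu hv huv
  · rw [← cos_two_pi_sub]
    exact cos_le_cos_of_nonneg_of_le_pi hu (by linarith) (by linarith)

lemma Real.cos_le_max_cos_of_mem_Icc {x δ δ' : ℝ} (hδ : 0 ≤ δ) (hδ' : 0 ≤ δ')
    (hx : x ∈ Set.Icc δ (2 * π - δ')) : cos x ≤ max (cos δ) (cos δ') := by
  rcases le_total δ δ' with h | h
  · exact (cos_le_cos_of_nonneg_of_add_le_two_pi hδ hx.1 (by linarith [hx.2])).trans
      (le_max_left _ _)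
  · exact (cos_le_cos_of_nonneg_of_add_le_two_pi hδ' (by linarith [hx.1])
      (by linarith [hx.2])).trans (le_max_right _ _)

-- `hout`: modulo `2π`, no `t k` lies in the open arc `(a, b)`.
lemma iSup_cos_sub_eq_max_of_arc {ι : Type*} [Finite ι] {t : ι → ℝ} {a b θ : ℝ}
    (hout : ∀ k, (t k ≤ a ∧ b ≤ t k + 2 * π) ∨ (b ≤ t k ∧ t k ≤ a + 2 * π))
    (ha : ∃ k, t k = a) (hb : ∃ k, t k = b ∨ t k + 2 * π = b) (hθ : θ ∈ Set.Icc a b) :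
    ⨆ k, cos (θ - t k) = max (cos (θ - a)) (cos (b - θ)) := by
  obtain ⟨ka, rfl⟩ := ha
  have : Nonempty ι := ⟨ka⟩
  have hbdd : BddAbove (Set.range fun k => cos (θ - t k)) := (Set.finite_range _).bddAbove
  refine le_antisymm (ciSup_le fun k => ?_) (max_le (le_ciSup hbdd ka) ?_)
  · rcases hout k with ⟨hk, hk'⟩ | ⟨hk, hk'⟩
    · exact cos_le_max_cos_of_mem_Icc (by linarith [hθ.1]) (by linarith [hθ.2])
        ⟨by linarith, by linarith⟩
    · rw [← cos_neg, neg_sub, max_comm]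
      exact cos_le_max_cos_of_mem_Icc (by linarith [hθ.2]) (by linarith [hθ.1])
        ⟨by linarith, by linarith⟩
  · obtain ⟨kb, rfl | rfl⟩ := hb
    · rw [← cos_neg, neg_sub]
      exact le_ciSup hbdd kb
    · rw [← cos_neg, neg_sub, sub_add_eq_sub_sub, cos_sub_two_pi]
      exact le_ciSup hbdd kb

lemma integral_comp_max_cos_arc {φ : ℝ → ℝ} (hφ : Continuous φ) {a b : ℝ} (hab : a ≤ b)
    (hba : b ≤ a + 2 * π) :
    ∫ θ in a..b, φ (max (cos (θ - a)) (cos (b - θ))) = 2 * ∫ x in 0..(b - a) / 2, φ (cos x) := by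
  set m := (a + b) / 2 with hm
  have hleft : ∀ θ ∈ Set.uIcc a m, φ (max (cos (θ - a)) (cos (b - θ))) = φ (cos (θ - a)) := by
    intro θ hθ
    rw [Set.uIcc_of_le (by linarith)] at hθ
    rw [max_eq_left (cos_le_cos_of_nonneg_of_add_le_two_pi (by linarith [hθ.1])
      (by linarith [hθ.2]) (by linarith))]
  have hright : ∀ θ ∈ Set.uIcc m b, φ (max (cos (θ - a)) (cos (b - θ))) = φ (cos (b - θ)) := by
    intro θ hθ
    rw [Set.uIcc_of_le (by linarith)] at hθ
    rw [max_eq_right (cos_le_cos_of_nonneg_of_add_le_two_pi (by linarith [hθ.2])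
      (by linarith [hθ.1]) (by linarith))]
  have hint : ∀ x y, IntervalIntegrable (fun θ => φ (max (cos (θ - a)) (cos (b - θ)))) volume x y :=
    fun x y => (by fun_prop : Continuous _).intervalIntegrable x y
  rw [← intervalIntegral.integral_add_adjacent_intervals (hint a m) (hint m b),
    intervalIntegral.integral_congr hleft, intervalIntegral.integral_congr hright,
    intervalIntegral.integral_comp_sub_right (fun x => φ (cos x)),
    intervalIntegral.integral_comp_sub_left (fun x => φ (cos x)), sub_self, sub_self,
    show m - a = (b - a) / 2 by ring, show b - m = (b - a) / 2 by ring]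
  ring

lemma integral_Ico_eq_sum_integral_of_periodic {g : ℝ → ℝ} {T : ℝ} (hg : Continuous g)
    (hper : Function.Periodic g T) (hT : 0 ≤ T) {s : ℕ → ℝ} {N : ℕ} (hs : s N = s 0 + T) :
    ∫ θ in Set.Ico 0 T, g θ = ∑ i ∈ Finset.range N, ∫ θ in s i..s (i + 1), g θ := by
  rw [integral_Ico_eq_integral_Ioo, ← integral_Ioc_eq_integral_Ioo,
    ← intervalIntegral.integral_of_le hT, intervalIntegral.sum_integral_adjacent_intervals
      fun k _ => hg.intervalIntegrable _ _, hs, ← hper.intervalIntegral_add_eq 0 (s 0), zero_add]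

lemma gmax_eq_iSup_cos (N : ℕ) (t : Fin N → ℝ) (θ : ℝ) :
    gmax N t θ = ⨆ k, cos (θ - t k) := by
  refine iSup_congr fun k => ?_
  rw [← Complex.exp_conj, ← Complex.exp_add, map_mul, Complex.conj_ofReal, Complex.conj_I,
    show (θ : ℂ) * -Complex.I + t k * Complex.I = ((t k - θ : ℝ) : ℂ) * Complex.I by
      push_cast; ring,
    Complex.exp_ofReal_mul_I_re, ← cos_neg, neg_sub]

lemma continuous_gmax {N : ℕ} (hN : 0 < N) (t : Fin N → ℝ) : Continuous (gmax N t) := by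
  have : Nonempty (Fin N) := Fin.pos_iff_nonempty.mp hN
  have h : gmax N t = fun θ => Finset.univ.sup' Finset.univ_nonempty fun k => cos (θ - t k) :=
    funext fun θ => by rw [gmax_eq_iSup_cos, Finset.sup'_univ_eq_ciSup]
  rw [h]
  exact Continuous.finset_sup'_apply _ fun k _ => by fun_prop

lemma gmax_periodic (N : ℕ) (t : Fin N → ℝ) : Function.Periodic (gmax N t) (2 * π) := by
  intro θ
  simp only [gmax_eq_iSup_cos, add_sub_right_comm, cos_add_two_pi]

def extendedAngle (N : ℕ) (hN : 0 < N) (t : Fin N → ℝ) (j : ℕ) : ℝ :=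
  if h : j < N then t ⟨j, h⟩ else t ⟨0, hN⟩ + 2 * π

namespace extendedAngle

variable {N : ℕ} (hN : 0 < N) (t : Fin N → ℝ)

lemma apply_coe (k : Fin N) : extendedAngle N hN t k = t k := by
  simp [extendedAngle]

lemma wrap : extendedAngle N hN t N = extendedAngle N hN t 0 + 2 * π := by
  simp [extendedAngle, hN]

lemma gap_eq_sub (i : Fin N) :
    gap N t i = extendedAngle N hN t (i + 1) - extendedAngle N hN t i := by
  simp [gap, extendedAngle]

variable {t}

lemma monotoneOn (hmono : Monotone t) (hrange : ∀ i, t i ∈ Set.Ico 0 (2 * π)) :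
    MonotoneOn (extendedAngle N hN t) (Set.Iic N) := by
  intro i hi j hj hij
  rcases (Set.mem_Iic.mp hj).lt_or_eq with hj | rfl
  · simp only [extendedAngle, dif_pos hj, dif_pos (hij.trans_lt hj)]
    exact hmono (Fin.mk_le_mk.mpr hij)
  · rcases hij.lt_or_eq with hi | rfl
    · simp only [extendedAngle, dif_pos hi, lt_irrefl, dif_neg, not_false_eq_true]
      linarith [(hrange ⟨i, hi⟩).2, (hrange ⟨0, hN⟩).1]
    · exact le_rfl

variable {hN}

lemma le_add_two_pi (hs : MonotoneOn (extendedAngle N hN t) (Set.Iic N)) {i j : ℕ} (hi : i ≤ N)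
    (hj : j ≤ N) : extendedAngle N hN t j ≤ extendedAngle N hN t i + 2 * π := by
  calc extendedAngle N hN t j ≤ extendedAngle N hN t N := hs hj Set.self_mem_Iic hj
    _ = extendedAngle N hN t 0 + 2 * π := wrap hN t
    _ ≤ extendedAngle N hN t i + 2 * π := by grw [hs (Nat.zero_le N) hi (Nat.zero_le i)]

lemma iSup_cos_sub_eq_max (hs : MonotoneOn (extendedAngle N hN t) (Set.Iic N)) {i : ℕ}
    (hi : i < N) {θ : ℝ}
    (hθ : θ ∈ Set.Icc (extendedAngle N hN t i) (extendedAngle N hN t (i + 1))) :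
    ⨆ k, cos (θ - t k) =
      max (cos (θ - extendedAngle N hN t i)) (cos (extendedAngle N hN t (i + 1) - θ)) := by
  refine iSup_cos_sub_eq_max_of_arc (fun k => ?_) ⟨⟨i, hi⟩, (apply_coe hN t _).symm⟩ ?_ hθ
  · rw [← apply_coe hN t k]
    rcases le_or_gt (k : ℕ) i with hk | hk
    · exact Or.inl ⟨hs k.isLt.le hi.le hk, le_add_two_pi hs k.isLt.le hi⟩
    · exact Or.inr ⟨hs hi k.isLt.le hk, le_add_two_pi hs hi.le k.isLt.le⟩
  · rcases (show i + 1 ≤ N from hi).lt_or_eq with h | h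
    · exact ⟨⟨i + 1, h⟩, Or.inl (apply_coe hN t _).symm⟩
    · exact ⟨⟨0, hN⟩, Or.inr (by rw [h, wrap, ← apply_coe hN t ⟨0, hN⟩])⟩

end extendedAngle

lemma sum_gap_eq_two_pi {N : ℕ} (hN : 0 < N) (t : Fin N → ℝ) : ∑ i, gap N t i = 2 * π := by
  simp only [extendedAngle.gap_eq_sub hN]
  rw [Fin.sum_univ_eq_sum_range (fun j => extendedAngle N hN t (j + 1) - extendedAngle N hN t j),
    Finset.sum_range_sub, extendedAngle.wrap]
  ring

lemma integral_comp_gmax {N : ℕ} (hN : 0 < N) {t : Fin N → ℝ} (hmono : Monotone t)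
    (hrange : ∀ i, t i ∈ Set.Ico 0 (2 * π)) {φ : ℝ → ℝ} (hφ : Continuous φ) :
    ∫ θ in Set.Ico 0 (2 * π), φ (gmax N t θ) =
      ∑ i, 2 * ∫ x in 0..gap N t i / 2, φ (cos x) := by
  have hs := extendedAngle.monotoneOn hN hmono hrange
  rw [integral_Ico_eq_sum_integral_of_periodic (g := fun θ => φ (gmax N t θ))
    (hφ.comp (continuous_gmax hN t)) ((gmax_periodic N t).comp φ) two_pi_pos.le
    (extendedAngle.wrap hN t), ← Fin.sum_univ_eq_sum_range]
  refine Finset.sum_congr rfl fun i _ => ?_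
  have hi : (i : ℕ) + 1 ≤ N := i.isLt
  have hle := hs i.isLt.le hi (Nat.le_succ i)
  rw [intervalIntegral.integral_congr fun θ hθ => congrArg φ ?_,
    integral_comp_max_cos_arc hφ hle (extendedAngle.le_add_two_pi hs i.isLt.le hi),
    extendedAngle.gap_eq_sub hN]
  rw [Set.uIcc_of_le hle] at hθ
  exact (gmax_eq_iSup_cos N t θ).trans (extendedAngle.iSup_cos_sub_eq_max hs i.isLt hθ)

lemma two_mul_integral_cos_sq (δ : ℝ) : 2 * ∫ x in 0..δ / 2, cos x ^ 2 = (δ + sin δ) / 2 := by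
  rw [integral_cos_sq, show sin δ = sin (2 * (δ / 2)) by ring_nf, sin_two_mul]
  simp only [cos_zero, sin_zero]
  ring

/-- for `Z` uniform on `S¹`,
`E[G_max] = (1/π) Σ sin(Δ_i/2)` and `E[G_max²] = 1/2 + (1/(4π)) Σ sin Δ_i`. -/
theorem stmt10 (N : ℕ) (hN : 0 < N) (t : Fin N → ℝ) (hmono : Monotone t)
    (hrange : ∀ i, t i ∈ Set.Ico (0 : ℝ) (2 * π)) :
    ((1 / (2 * π)) * ∫ θ in Set.Ico (0 : ℝ) (2 * π), gmax N t θ =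
      (1 / π) * ∑ i : Fin N, Real.sin (gap N t i / 2)) ∧
    ((1 / (2 * π)) * ∫ θ in Set.Ico (0 : ℝ) (2 * π), gmax N t θ ^ 2 =
      1 / 2 + (1 / (4 * π)) * ∑ i : Fin N, Real.sin (gap N t i)) := by
  have hπ := pi_ne_zero
  constructor
  · rw [integral_comp_gmax hN hmono hrange (φ := fun x => x) continuous_id]
    simp only [integral_cos, sin_zero, sub_zero, ← Finset.mul_sum]
    field_simp
  · rw [integral_comp_gmax hN hmono hrange (φ := fun x => x ^ 2) (continuous_pow 2)]
    simp only [two_mul_integral_cos_sq, ← Finset.sum_div, Finset.sum_add_distrib,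
      sum_gap_eq_two_pi hN t]
    field_simp
    ring
end
end
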